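/- arXiv:2303.10706 — 7 statements merged into one kernel-verified Lean document; each statement's English description precedes it below -/
import Mathlib

section
/- Let X be a finite set of points in ℝ^d and let T be a max-sum tree of X, i.e., a tree with vertex set X that maximizes the cost (the sum of Euclidean distances between pairs of vertices joined by an edge) among all trees with vertex set X. Then T is a Tverberg graph: the closed balls B(xy) over all edges xy of T have a common point. -/
/-!
Let `z` be the center of the smallest ball containing `X`, of radius `R`; then `z` lies in the
convex hull of the points of `X` at distance `R` from `z`, since otherwise moving `z` slightly
towards that hull would shrink the ball. Fix an edge `uv` of the max-sum tree `T`. Removing it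
splits `X` into two sides, and exchanging `uv` for any `pq` across the sides gives another tree,
so `|pq| ≤ |uv|`. Writing `z` as a convex combination of the far points on both sides, this
forces `⟪u - z, v - z⟫ ≤ 0`, i.e. `z` lies in the ball with diameter `uv`.
-/

/-- The cost of a graph whose vertices are (labelled by) points in `ℝ^d`:
the sum of Euclidean distances between the pairs of vertices joined by an edge. -/
noncomputable def graphCost {d : ℕ} {V : Type} [Fintype V]
    (p : V → EuclideanSpace ℝ (Fin d)) (G : SimpleGraph V) : ℝ :=
  ∑ e ∈ (Set.toFinite G.edgeSet).toFinset,
    Sym2.lift ⟨fun x y => dist (p x) (p y), fun _ _ => dist_comm _ _⟩ e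

open Filter Topology Finset

open scoped RealInnerProductSpace

section InnerProductSpace

variable {E : Type*} [NormedAddCommGroup E] [InnerProductSpace ℝ E]

lemma real_inner_sub_sub_eq_dist (z x y : E) :
    ⟪x - z, y - z⟫ = (dist z x ^ 2 + dist z y ^ 2 - dist x y ^ 2) / 2 := by
  rw [real_inner_eq_norm_mul_self_add_norm_mul_self_sub_norm_sub_mul_self_div_two,
    sub_sub_sub_cancel_right, dist_comm z x, dist_comm z y, dist_eq_norm, dist_eq_norm,
    dist_eq_norm]
  ring

lemma dist_midpoint_le_of_inner_nonpos {x y z : E} (h : ⟪x - z, y - z⟫ ≤ 0) :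
    dist z (midpoint ℝ x y) ≤ dist x y / 2 := by
  have hA := EuclideanGeometry.dist_sq_add_dist_sq_eq_two_mul_dist_midpoint_sq_add_half_dist_sq
    z x y
  rw [real_inner_sub_sub_eq_dist] at h
  refine (pow_le_pow_iff_left₀ dist_nonneg (by positivity) two_ne_zero).1 ?_
  linarith

lemma real_inner_sub_sub_le_of_dist_le {z u v a b : E} (hab : dist a b ≤ dist u v)
    (hu : dist z u ≤ dist z a) (hv : dist z v ≤ dist z b) :
    ⟪u - z, v - z⟫ ≤ ⟪a - z, b - z⟫ := by
  rw [real_inner_sub_sub_eq_dist, real_inner_sub_sub_eq_dist]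
  gcongr ?_ / 2
  have := pow_le_pow_left₀ dist_nonneg hu 2
  have := pow_le_pow_left₀ dist_nonneg hv 2
  have := pow_le_pow_left₀ dist_nonneg hab 2
  linarith

lemma sum_mul_le_inner_sum_smul {ι : Type*} {s : Finset ι} {w : ι → ℝ} {y : ι → E} {x : E}
    {γ : ℝ} (hw : ∀ i ∈ s, 0 ≤ w i) (h : ∀ i ∈ s, γ ≤ ⟪y i, x⟫) :
    (∑ i ∈ s, w i) * γ ≤ ⟪∑ i ∈ s, w i • y i, x⟫ := by
  rw [sum_inner, sum_mul]
  gcongr with i hi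
  rw [real_inner_smul_left]
  exact mul_le_mul_of_nonneg_left (h i hi) (hw i hi)

/-- With `c` the `P`-part of `∑ w i • y i` (so the other part is `-c`) and `α`, `β` the total
weights of the two parts, the cross bound gives `α β γ ≤ ⟪c, -c⟫`, so `c = 0` if `γ > 0`; the
other two bounds then give `(α + β) γ ≤ 0`. -/
lemma nonpos_of_le_inner_of_sum_smul_eq_zero {ι : Type*} {s : Finset ι} {w : ι → ℝ}
    {y : ι → E} (P : ι → Prop) [DecidablePred P] {a b : E} {γ : ℝ}
    (hw₀ : ∀ i ∈ s, 0 ≤ w i) (hw₁ : ∑ i ∈ s, w i = 1) (hy : ∑ i ∈ s, w i • y i = 0)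
    (ha : ∀ i ∈ s, ¬ P i → γ ≤ ⟪y i, a⟫) (hb : ∀ i ∈ s, P i → γ ≤ ⟪y i, b⟫)
    (hab : ∀ i ∈ s, P i → ∀ j ∈ s, ¬ P j → γ ≤ ⟪y i, y j⟫) : γ ≤ 0 := by
  by_contra! hγ
  set sA := s.filter P
  set sB := s.filter (¬ P ·)
  set c := ∑ i ∈ sA, w i • y i
  have hc : ∑ j ∈ sB, w j • y j = -c := by
    rw [eq_neg_iff_add_eq_zero, add_comm, sum_filter_add_sum_filter_not, hy]
  have hαβ : ∑ i ∈ sA, w i + ∑ j ∈ sB, w j = 1 := by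
    rw [sum_filter_add_sum_filter_not, hw₁]
  have hwA : ∀ i ∈ sA, 0 ≤ w i := fun i hi => hw₀ i (mem_filter.1 hi).1
  have hwB : ∀ j ∈ sB, 0 ≤ w j := fun j hj => hw₀ j (mem_filter.1 hj).1
  have hcb : (∑ i ∈ sA, w i) * γ ≤ ⟪c, b⟫ :=
    sum_mul_le_inner_sum_smul hwA fun i hi => hb i (mem_filter.1 hi).1 (mem_filter.1 hi).2
  have hca : (∑ j ∈ sB, w j) * γ ≤ ⟪-c, a⟫ := hc ▸
    sum_mul_le_inner_sum_smul hwB fun j hj => ha j (mem_filter.1 hj).1 (mem_filter.1 hj).2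
  have hcc : (∑ i ∈ sA, w i) * ((∑ j ∈ sB, w j) * γ) ≤ ⟪c, -c⟫ := by
    refine sum_mul_le_inner_sum_smul hwA fun i hi => ?_
    rw [← hc, real_inner_comm]
    refine sum_mul_le_inner_sum_smul hwB fun j hj => ?_
    rw [real_inner_comm]
    exact hab i (mem_filter.1 hi).1 (mem_filter.1 hi).2 j (mem_filter.1 hj).1 (mem_filter.1 hj).2
  have hc0 : c = 0 := by
    have := mul_nonneg (sum_nonneg hwA) (mul_nonneg (sum_nonneg hwB) hγ.le)
    rw [inner_neg_right] at hcc
    exact inner_self_eq_zero.1 (le_antisymm (by linarith) real_inner_self_nonneg)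
  rw [hc0, inner_zero_left] at hcb
  rw [hc0, neg_zero, inner_zero_left] at hca
  nlinarith

lemma real_inner_sub_sub_nonpos_of_forall_dist_le {X : Finset E} {z : E} {R : ℝ}
    (hR : ∀ x ∈ X, dist z x ≤ R) (hz : z ∈ convexHull ℝ ↑{x ∈ X | dist z x = R})
    (A : Set E) {u v : E} (hu : u ∈ X) (hv : v ∈ X) (huA : u ∈ A) (hvA : v ∉ A)
    (hmax : ∀ p ∈ X, ∀ q ∈ X, p ∈ A → q ∉ A → dist p q ≤ dist u v) :
    ⟪u - z, v - z⟫ ≤ 0 := by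
  classical
  obtain ⟨w, hw₀, hw₁, hwz⟩ := Finset.mem_convexHull'.1 hz
  have hy : ∑ x ∈ {x ∈ X | dist z x = R}, w x • (x - z) = 0 := by
    simp only [smul_sub, sum_sub_distrib, ← sum_smul, hw₁, hwz, one_smul, sub_self]
  have hfar {x} (hx : x ∈ {x ∈ X | dist z x = R}) (y : E) (hy : y ∈ X) :
      dist z y ≤ dist z x := by
    rw [(mem_filter.1 hx).2]
    exact hR y hy
  refine nonpos_of_le_inner_of_sum_smul_eq_zero (· ∈ A) (a := u - z) (b := v - z) hw₀ hw₁ hy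
    ?_ ?_ ?_
  · intro j hj hjA
    rw [real_inner_comm (u - z)]
    exact real_inner_sub_sub_le_of_dist_le (hmax u hu _ (mem_filter.1 hj).1 huA hjA) le_rfl
      (hfar hj v hv)
  · intro i hi hiA
    exact real_inner_sub_sub_le_of_dist_le (hmax _ (mem_filter.1 hi).1 v hv hiA hvA)
      (hfar hi u hu) le_rfl
  · intro i hi hiA j hj hjA
    exact real_inner_sub_sub_le_of_dist_le
      (hmax _ (mem_filter.1 hi).1 _ (mem_filter.1 hj).1 hiA hjA) (hfar hi u hu) (hfar hj v hv)

lemma eventually_dist_sub_smul_lt {z a y : E} (h : 0 < ⟪z - a, y⟫) :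
    ∀ᶠ t in 𝓝[>] (0 : ℝ), dist (z - t • y) a < dist z a := by
  have hlim : Tendsto (fun t : ℝ => 2 * ⟪z - a, y⟫ - t * ‖y‖ ^ 2) (𝓝[>] 0)
      (𝓝 (2 * ⟪z - a, y⟫ - 0 * ‖y‖ ^ 2)) :=
    (Continuous.tendsto (by fun_prop) 0).mono_left nhdsWithin_le_nhds
  filter_upwards [self_mem_nhdsWithin, hlim.eventually (lt_mem_nhds (by linarith : (0 : ℝ) < _))]
    with t (ht : 0 < t) hpos
  have hexp : dist (z - t • y) a ^ 2 = dist z a ^ 2 - t * (2 * ⟪z - a, y⟫ - t * ‖y‖ ^ 2) := by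
    rw [dist_eq_norm, dist_eq_norm, sub_right_comm, norm_sub_sq_real, real_inner_smul_right,
      norm_smul, Real.norm_of_nonneg ht.le]
    ring
  refine (pow_lt_pow_iff_left₀ dist_nonneg dist_nonneg two_ne_zero).1 ?_
  rw [hexp]
  nlinarith

end InnerProductSpace

theorem Finset.exists_forall_dist_le_and_mem_convexHull {E : Type*} [NormedAddCommGroup E]
    [InnerProductSpace ℝ E] [FiniteDimensional ℝ E] (X : Finset E) (hX : X.Nonempty) :
    ∃ (z : E) (R : ℝ), (∀ x ∈ X, dist z x ≤ R) ∧ z ∈ convexHull ℝ ↑{x ∈ X | dist z x = R} := by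
  set F : E → ℝ := fun z => X.sup' hX (dist z)
  obtain ⟨z, hz⟩ : ∃ z, ∀ z', F z ≤ F z' := by
    have ⟨x₀, hx₀⟩ := hX
    exact (Continuous.finset_sup'_apply hX fun x _ => continuous_id.dist continuous_const)
      |>.exists_forall_le <| tendsto_atTop_mono (fun z' => le_sup' (dist z') hx₀)
        (tendsto_dist_right_cocompact_atTop x₀)
  refine ⟨z, F z, fun x hx => le_sup' (dist z) hx, ?_⟩
  by_contra hzK
  obtain ⟨f, c, hfK, hcz⟩ := geometric_hahn_banach_closed_point (convex_convexHull ℝ _)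
    ((finite_toSet _).isClosed_convexHull ℝ) hzK
  set y := (InnerProductSpace.toDual ℝ E).symm f
  have hdec : ∀ x ∈ X, ∀ᶠ t in 𝓝[>] (0 : ℝ), dist (z - t • y) x < F z := by
    intro x hx
    rcases (show dist z x ≤ F z from le_sup' _ hx).lt_or_eq with hlt | heq
    · have hcont : Continuous fun t : ℝ => dist (z - t • y) x := by fun_prop
      exact (hcont.tendsto' 0 _ (by simp)).eventually (gt_mem_nhds hlt) |>.filter_mono
        nhdsWithin_le_nhds
    · rw [← heq]
      apply eventually_dist_sub_smul_lt
      have := hfK x (subset_convexHull ℝ _ (by simp [hx, heq]))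
      rw [inner_sub_left, real_inner_comm, InnerProductSpace.toDual_symm_apply, real_inner_comm,
        InnerProductSpace.toDual_symm_apply]
      linarith
  obtain ⟨t, ht⟩ := ((eventually_all_finset X).2 hdec).exists
  exact (hz (z - t • y)).not_gt ((sup'_lt_iff hX).2 ht)

namespace SimpleGraph

variable {V : Type*} {G : SimpleGraph V}

lemma Preconnected.reachable_deleteEdges_or (hG : G.Preconnected) (u v w : V) :
    (G.deleteEdges {s(u, v)}).Reachable w u ∨ (G.deleteEdges {s(u, v)}).Reachable w v := by
  set H := G.deleteEdges {s(u, v)}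
  by_contra h
  obtain ⟨p⟩ := hG u w
  obtain ⟨d, -, hd, hd'⟩ :=
    p.exists_boundary_dart {a | H.Reachable a u ∨ H.Reachable a v} (Or.inl .rfl) h
  apply hd'
  by_cases he : s(d.fst, d.snd) = s(u, v)
  · rcases Sym2.eq_iff.1 he with ⟨-, h⟩ | ⟨-, h⟩ <;> rw [Set.mem_ofPred_eq, h] <;> simp
  · have hadj : H.Adj d.snd d.fst := by
      rw [deleteEdges_adj, Set.mem_singleton_iff, Sym2.eq_swap]
      exact ⟨d.adj.symm, he⟩
    exact hd.imp hadj.reachable.trans hadj.reachable.trans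

lemma IsAcyclic.not_reachable_deleteEdges (hG : G.IsAcyclic) {u v : V} (huv : G.Adj u v) :
    ¬ (G.deleteEdges {s(u, v)}).Reachable u v :=
  isAcyclic_iff_forall_adj_isBridge.1 hG huv

lemma IsTree.sup_edge_deleteEdges (hG : G.IsTree) {u v p q : V} (huv : G.Adj u v)
    (hp : (G.deleteEdges {s(u, v)}).Reachable p u)
    (hq : (G.deleteEdges {s(u, v)}).Reachable q v) :
    (G.deleteEdges {s(u, v)} ⊔ edge p q).IsTree := by
  set H := G.deleteEdges {s(u, v)}
  have hpq : ¬ H.Reachable p q := fun h =>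
    hG.isAcyclic.not_reachable_deleteEdges huv (hp.symm.trans (h.trans hq))
  have hadj : (H ⊔ edge p q).Adj p q :=
    Or.inr ((edge_adj ..).2 ⟨Or.inl ⟨rfl, rfl⟩, fun h => hpq (h ▸ .rfl)⟩)
  have hreach (w : V) : (H ⊔ edge p q).Reachable w u :=
    (hG.connected.preconnected.reachable_deleteEdges_or u v w).elim (·.mono le_sup_left)
      fun h => ((h.trans hq.symm).mono le_sup_left).trans
        (hadj.symm.reachable.trans (hp.mono le_sup_left))
  have : Nonempty V := ⟨u⟩
  exact ⟨⟨fun a b => (hreach a).trans (hreach b).symm⟩,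
    (hG.isAcyclic.anti (deleteEdges_le _)).sup_edge_of_not_reachable hpq⟩

end SimpleGraph

section GraphCost

open SimpleGraph

variable {d : ℕ} {V : Type} [Fintype V] (p : V → EuclideanSpace ℝ (Fin d)) (G : SimpleGraph V)

lemma graphCost_eq_sum_edgeFinset [Fintype G.edgeSet] :
    graphCost p G = ∑ e ∈ G.edgeFinset,
      Sym2.lift ⟨fun x y => dist (p x) (p y), fun _ _ => dist_comm _ _⟩ e := by
  rw [graphCost, Set.toFinite_toFinset]
  rfl

lemma graphCost_sup_edge {s t : V} (hn : ¬ G.Adj s t) (hst : s ≠ t) :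
    graphCost p (G ⊔ edge s t) = graphCost p G + dist (p s) (p t) := by
  classical
  rw [graphCost_eq_sum_edgeFinset, graphCost_eq_sum_edgeFinset, G.edgeFinset_sup_edge hn hst,
    sum_cons, add_comm]
  rfl

lemma graphCost_deleteEdges_singleton {s t : V} (h : G.Adj s t) :
    graphCost p (G.deleteEdges {s(s, t)}) = graphCost p G - dist (p s) (p t) := by
  classical
  have he : (G.deleteEdges {s(s, t)}).edgeFinset = G.edgeFinset.erase s(s, t) := by
    ext e
    simp [and_comm]
  rw [graphCost_eq_sum_edgeFinset, graphCost_eq_sum_edgeFinset, he, sum_erase_eq_sub (by simpa)]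
  rfl

end GraphCost

/-- A max-sum tree of any finite point set in `ℝ^d` is a Tverberg graph: the closed
balls with diameters induced by its edges have a common point. -/
theorem maxSumTree_isTverberg {d : ℕ} (X : Finset (EuclideanSpace ℝ (Fin d)))
    (T : SimpleGraph {x // x ∈ X}) (hT : T.IsTree)
    (hmax : ∀ T' : SimpleGraph {x // x ∈ X}, T'.IsTree →
      graphCost (Subtype.val) T' ≤
        graphCost (Subtype.val) T) :
    ∃ z : EuclideanSpace ℝ (Fin d), ∀ x y : {x // x ∈ X}, T.Adj x y →
      dist z (midpoint ℝ (x : EuclideanSpace ℝ (Fin d)) (y : EuclideanSpace ℝ (Fin d))) ≤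
        dist (x : EuclideanSpace ℝ (Fin d)) (y : EuclideanSpace ℝ (Fin d)) / 2 := by
  obtain ⟨⟨x₀, hx₀⟩⟩ := hT.connected.nonempty
  obtain ⟨z, R, hR, hz⟩ := X.exists_forall_dist_le_and_mem_convexHull ⟨x₀, hx₀⟩
  refine ⟨z, fun x y hxy => dist_midpoint_le_of_inner_nonpos ?_⟩
  set H := T.deleteEdges {s(x, y)}
  have hsep : ¬ H.Reachable x y := hT.isAcyclic.not_reachable_deleteEdges hxy
  refine real_inner_sub_sub_nonpos_of_forall_dist_le hR hz {w | ∃ hw : w ∈ X, H.Reachable ⟨w, hw⟩ x}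
    x.2 y.2 ⟨x.2, .rfl⟩ (fun ⟨_, h⟩ => hsep h.symm) ?_
  rintro p hp q hq ⟨_, hpx⟩ hqx
  have hqy : H.Reachable ⟨q, hq⟩ y :=
    (hT.connected.preconnected.reachable_deleteEdges_or x y _).resolve_left fun h => hqx ⟨hq, h⟩
  have hpq : ¬ H.Reachable ⟨p, hp⟩ ⟨q, hq⟩ := fun h => hsep (hpx.symm.trans (h.trans hqy))
  have hcost := hmax _ (hT.sup_edge_deleteEdges hxy hpx hqy)
  rw [graphCost_sup_edge _ _ (fun h => hpq h.reachable) (fun h => hpq (h ▸ .rfl)),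
    graphCost_deleteEdges_singleton _ _ hxy] at hcost
  linarith
end

section
/- Let f₁, …, f_m : ℝ^d → ℝ be convex functions and define f : ℝ^d → ℝ by f(x) = max{f₁(x), …, f_m(x)}. For a point x ∈ ℝ^d put I(x) = {1 ≤ i ≤ m : f_i(x) = f(x)}. If f attains its global minimum at a point y ∈ ℝ^d and, for each i ∈ I(y), the function f_i is differentiable at y, then the origin o of ℝ^d satisfies o ∈ conv{∇f_i(y) : i ∈ I(y)}, where ∇f_i(y) is the gradient of f_i at y. -/
/-! If `0` is not in the convex hull of the active gradients, separating it from that (compact)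
hull gives a direction `v` with `⟪∇fᵢ(y), v⟫ < 0` for every active `i`. Moving from `y` a
little along `v` then strictly decreases every active `fᵢ`, while the inactive ones, being
continuous (convex functions on `ℝᵈ` are), stay below `F y`; hence `F` drops below `F y`. -/

open Filter Topology Set
open scoped RealInnerProductSpace

theorem exists_forall_inner_neg_of_zero_notMem_convexHull {E : Type*} [NormedAddCommGroup E]
    [InnerProductSpace ℝ E] [CompleteSpace E] {s : Set E} (hs : s.Finite)
    (h : (0 : E) ∉ convexHull ℝ s) : ∃ v : E, ∀ g ∈ s, ⟪g, v⟫ < 0 := by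
  obtain ⟨φ, u, hφ, hu⟩ :=
    geometric_hahn_banach_closed_point (convex_convexHull ℝ s) (hs.isClosed_convexHull ℝ) h
  refine ⟨(InnerProductSpace.toDual ℝ E).symm φ, fun g hg => ?_⟩
  rw [real_inner_comm, InnerProductSpace.toDual_symm_apply]
  exact (hφ g (subset_convexHull ℝ s hg)).trans (by simpa using hu)

theorem HasLineDerivAt.eventually_lt_of_neg {E : Type*} [AddCommGroup E] [Module ℝ E]
    {f : E → ℝ} {f' : ℝ} {x v : E} (hf : HasLineDerivAt ℝ f f' x v) (hf' : f' < 0) :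
    ∀ᶠ t in 𝓝[>] (0 : ℝ), f (x + t • v) < f x := by
  have hslope := (hasDerivAt_iff_tendsto_slope_left_right.1 hf).2
  filter_upwards [hslope.eventually (eventually_lt_nhds hf'), self_mem_nhdsWithin]
    with t ht (htpos : 0 < t)
  simpa using (slope_neg_iff_of_le htpos.le).1 ht

theorem HasGradientAt.hasLineDerivAt {E : Type*} [NormedAddCommGroup E]
    [InnerProductSpace ℝ E] [CompleteSpace E] {f : E → ℝ} {f' x : E}
    (hf : HasGradientAt f f' x) (v : E) : HasLineDerivAt ℝ f ⟪f', v⟫ x v := by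
  simpa using hf.hasFDerivAt.hasLineDerivAt v

theorem ContinuousAt.eventually_lt_along {E : Type*} [NormedAddCommGroup E] [NormedSpace ℝ E]
    {f : E → ℝ} {x : E} {c : ℝ} (hf : ContinuousAt f x) (hx : f x < c) (v : E) :
    ∀ᶠ t in 𝓝 (0 : ℝ), f (x + t • v) < c := by
  have hline : Tendsto (fun t : ℝ => x + t • v) (𝓝 0) (𝓝 x) :=
    (continuous_const.add (continuous_id.smul continuous_const)).tendsto' 0 x (by simp)
  exact (hf.tendsto.comp hline).eventually (eventually_lt_nhds hx)

theorem exists_lt_of_isGreatest_range {ι α : Type*} [Finite ι] {f : ι → α → ℝ} {F : α → ℝ}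
    (hF : ∀ x, IsGreatest (range fun i => f i x) (F x)) {l : Filter α} [l.NeBot] {c : ℝ}
    (h : ∀ i, ∀ᶠ x in l, f i x < c) : ∃ x, F x < c := by
  obtain ⟨x, hx⟩ := (eventually_all.2 h).exists
  obtain ⟨j, hj⟩ := (hF x).1
  exact ⟨x, hj ▸ hx j⟩

/-- Let `f₁, …, f_m : ℝ^d → ℝ` be convex functions and let `F x = max_i f_i x`.
If `F` attains its global minimum at `y` and each `f_i` with `f_i y = F y` is
differentiable at `y`, then the origin lies in the convex hull of the gradients
`∇f_i(y)` over the indices `i` with `f_i y = F y`. -/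
theorem zero_mem_convexHull_gradients_of_isMinOn_max
    {d m : ℕ} (f : Fin m → EuclideanSpace ℝ (Fin d) → ℝ)
    (hconv : ∀ i, ConvexOn ℝ Set.univ (f i))
    (F : EuclideanSpace ℝ (Fin d) → ℝ)
    (hF : ∀ x, IsGreatest (Set.range fun i => f i x) (F x))
    (y : EuclideanSpace ℝ (Fin d))
    (hmin : ∀ x, F y ≤ F x)
    (hdiff : ∀ i, f i y = F y → DifferentiableAt ℝ (f i) y) :
    (0 : EuclideanSpace ℝ (Fin d)) ∈
      convexHull ℝ {g | ∃ i, f i y = F y ∧ g = gradient (f i) y} := by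
  by_contra h
  have hfin : {g | ∃ i, f i y = F y ∧ g = gradient (f i) y}.Finite :=
    (finite_range fun i => gradient (f i) y).subset fun g ⟨i, _, hg⟩ => ⟨i, hg.symm⟩
  obtain ⟨v, hv⟩ := exists_forall_inner_neg_of_zero_notMem_convexHull hfin h
  have hdescent : ∀ i, ∀ᶠ t in 𝓝[>] (0 : ℝ), f i (y + t • v) < F y := by
    intro i
    rcases ((hF y).2 ⟨i, rfl⟩).eq_or_lt with hactive | hinactive
    · rw [← hactive]
      exact ((hdiff i hactive).hasGradientAt.hasLineDerivAt v).eventually_lt_of_neg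
        (hv _ ⟨i, hactive, rfl⟩)
    · have hcont : ContinuousAt (f i) y :=
        ((hconv i).continuousOn isOpen_univ).continuousAt univ_mem
      exact nhdsWithin_le_nhds (hcont.eventually_lt_along hinactive v)
  obtain ⟨x, hx⟩ := exists_lt_of_isGreatest_range hF
    (l := map (fun t : ℝ => y + t • v) (𝓝[>] 0)) hdescent
  exact (hmin x).not_gt hx
end

section
/- Let S ⊂ ℝ² be an even-cardinality finite set of points and let M be a max-sum matching of S, i.e., a perfect matching of S maximizing the cost among all perfect matchings of S. Let ab ∈ M and let c ∈ ℝ² be a point with c ∉ S such that b lies on the line segment ac. Then the matching (M ∪ {ac}) \ {ab} has the maximum cost among all perfect matchings with vertex set (S ∪ {c}) \ {b}. -/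
open scoped Classical

/-- `M` is a perfect matching of the finite set `S`: its edges are non-degenerate
unordered pairs with endpoints in `S`, and every point of `S` lies in exactly one edge. -/
def IsMatchingOf {α : Type} (S : Finset α) (M : Finset (Sym2 α)) : Prop :=
  (∀ e ∈ M, ¬ e.IsDiag) ∧ (∀ e ∈ M, ∀ v ∈ e, v ∈ S) ∧ (∀ v ∈ S, ∃! e, e ∈ M ∧ v ∈ e)

/-- The cost of a matching of points in the plane: the sum of Euclidean distances
between the matched points. -/
noncomputable def matchingCost (M : Finset (Sym2 (EuclideanSpace ℝ (Fin 2)))) : ℝ :=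
  ∑ e ∈ M, Sym2.lift ⟨fun x y => dist x y, fun _ _ => dist_comm _ _⟩ e

/-- Swapping vertex `p` (endpoint of edge `s(p,x)`) for a fresh vertex `q` in a matching. -/
lemma swap_matching {α : Type} [DecidableEq α] {S : Finset α} {M : Finset (Sym2 α)}
    (h : IsMatchingOf S M) {p x : α} (q : α) (hp : s(p, x) ∈ M) (hq : q ∉ S) :
    IsMatchingOf (insert q (S.erase p)) (insert s(q, x) (M.erase s(p, x))) := by
  obtain ⟨hnd, hsub, huniq⟩ := h
  have hpx : p ≠ x := by
    have := hnd _ hp; simpa [Sym2.isDiag_iff_proj_eq] using this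
  have hpS : p ∈ S := hsub _ hp p (by simp)
  have hxS : x ∈ S := hsub _ hp x (by simp)
  have hqp : q ≠ p := fun h => hq (h ▸ hpS)
  have hqx : q ≠ x := fun h => hq (h ▸ hxS)
  -- edges other than s(p,x) avoid both p and x
  have hpavoid : ∀ e ∈ M.erase s(p, x), p ∉ e := by
    intro e he hpe
    obtain ⟨he1, he2⟩ := Finset.mem_erase.1 he |>.symm
    have := (huniq p hpS).unique ⟨he1, hpe⟩ ⟨hp, by simp⟩
    exact he2 this
  have hxavoid : ∀ e ∈ M.erase s(p, x), x ∉ e := by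
    intro e he hxe
    obtain ⟨he1, he2⟩ := Finset.mem_erase.1 he |>.symm
    have := (huniq x hxS).unique ⟨he1, hxe⟩ ⟨hp, by simp⟩
    exact he2 this
  have hqavoid : ∀ e ∈ M.erase s(p, x), q ∉ e := by
    intro e he hqe
    exact hq (hsub _ (Finset.mem_of_mem_erase he) q hqe)
  refine ⟨?_, ?_, ?_⟩
  · intro e he
    rcases Finset.mem_insert.1 he with rfl | he
    · simpa [Sym2.isDiag_iff_proj_eq] using hqx
    · exact hnd _ (Finset.mem_of_mem_erase he)
  · intro e he v hv
    rcases Finset.mem_insert.1 he with rfl | he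
    · rcases Sym2.mem_iff.1 hv with rfl | rfl
      · exact Finset.mem_insert_self _ _
      · exact Finset.mem_insert_of_mem (Finset.mem_erase.2 ⟨(Ne.symm hpx), hxS⟩)
    · have hvS : v ∈ S := hsub _ (Finset.mem_of_mem_erase he) v hv
      have hvp : v ≠ p := fun h => hpavoid e he (h ▸ hv)
      exact Finset.mem_insert_of_mem (Finset.mem_erase.2 ⟨hvp, hvS⟩)
  · intro v hv
    rcases Finset.mem_insert.1 hv with rfl | hv
    · refine ⟨s(v, x), ⟨Finset.mem_insert_self _ _, by simp⟩, ?_⟩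
      rintro e ⟨he, hve⟩
      rcases Finset.mem_insert.1 he with rfl | he
      · rfl
      · exact absurd hve (hqavoid e he)
    · obtain ⟨hvp, hvS⟩ := Finset.mem_erase.1 hv
      by_cases hvx : v = x
      · subst hvx
        refine ⟨s(q, v), ⟨Finset.mem_insert_self _ _, by simp⟩, ?_⟩
        rintro e ⟨he, hve⟩
        rcases Finset.mem_insert.1 he with rfl | he
        · rfl
        · exact absurd hve (hxavoid e he)
      · obtain ⟨e0, ⟨he0, hve0⟩, hu⟩ := huniq v hvS
        have he0' : e0 ≠ s(p, x) := by
          rintro rfl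
          rcases Sym2.mem_iff.1 hve0 with rfl | rfl
          · exact hvp rfl
          · exact hvx rfl
        refine ⟨e0, ⟨Finset.mem_insert_of_mem (Finset.mem_erase.2 ⟨he0', he0⟩), hve0⟩, ?_⟩
        rintro e ⟨he, hve⟩
        rcases Finset.mem_insert.1 he with rfl | he
        · rcases Sym2.mem_iff.1 hve with rfl | rfl
          · exact absurd hvS hq
          · exact absurd rfl hvx
        · exact hu e ⟨Finset.mem_of_mem_erase he, hve⟩

lemma swap_cost {M : Finset (Sym2 (EuclideanSpace ℝ (Fin 2)))}
    {p x : EuclideanSpace ℝ (Fin 2)} (q : EuclideanSpace ℝ (Fin 2))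
    (hp : s(p, x) ∈ M) (hq : s(q, x) ∉ M) :
    matchingCost (insert s(q, x) (M.erase s(p, x))) = matchingCost M - dist p x + dist q x := by
  have hq' : s(q, x) ∉ M.erase s(p, x) := fun h => hq (Finset.mem_of_mem_erase h)
  unfold matchingCost
  rw [Finset.sum_insert hq', Finset.sum_erase_eq_sub hp]
  simp [Sym2.lift]
  ring

/-- Elongating an edge of a max-sum matching yields a max-sum matching: if `M` is a
max-sum matching of an even planar point set `S`, `ab ∈ M`, `c ∉ S` and `b` lies on the
segment `ac`, then `(M ∪ {ac}) \ {ab}` is a perfect matching of `(S ∪ {c}) \ {b}` of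
maximum cost among all perfect matchings of `(S ∪ {c}) \ {b}`. -/
theorem maxSumMatching_elongate (S : Finset (EuclideanSpace ℝ (Fin 2)))
    (hS : Even S.card) (M : Finset (Sym2 (EuclideanSpace ℝ (Fin 2))))
    (hM : IsMatchingOf S M)
    (hmax : ∀ M' : Finset (Sym2 (EuclideanSpace ℝ (Fin 2))),
      IsMatchingOf S M' → matchingCost M' ≤ matchingCost M)
    (a b c : EuclideanSpace ℝ (Fin 2)) (hab : s(a, b) ∈ M)
    (hc : c ∉ S) (hbc : b ∈ segment ℝ a c) :
    IsMatchingOf ((insert c S).erase b) ((insert s(a, c) M).erase s(a, b)) ∧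
      ∀ M' : Finset (Sym2 (EuclideanSpace ℝ (Fin 2))),
        IsMatchingOf ((insert c S).erase b) M' →
          matchingCost M' ≤ matchingCost ((insert s(a, c) M).erase s(a, b)) := by
  obtain ⟨hnd, hsub, huniq⟩ := hM
  have hanb : a ≠ b := by
    have := hnd _ hab; simpa [Sym2.isDiag_iff_proj_eq] using this
  have haS : a ∈ S := hsub _ hab a (by simp)
  have hbS : b ∈ S := hsub _ hab b (by simp)
  have hbnc : b ≠ c := fun h => hc (h ▸ hbS)
  have hdist : dist a b + dist b c = dist a c := dist_add_dist_of_mem_segment hbc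
  have hba : s(b, a) ∈ M := by rwa [Sym2.eq_swap]
  have hcaM : s(c, a) ∉ M := fun h => hc (hsub _ h c (by simp))
  -- rewrite the sets/matchings in "swap" form
  have hSet : (insert c S).erase b = insert c (S.erase b) := by
    rw [Finset.erase_insert_of_ne (Ne.symm hbnc)]
  have habac : s(a, b) ≠ s(a, c) := by
    rw [Ne, Sym2.eq_iff]
    rintro (⟨-, rfl⟩ | ⟨rfl, rfl⟩)
    · exact hbnc rfl
    · exact hanb rfl
  have hMat : (insert s(a, c) M).erase s(a, b) = insert s(c, a) (M.erase s(b, a)) := by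
    rw [Finset.erase_insert_of_ne (Ne.symm habac), Sym2.eq_swap, @Sym2.eq_swap _ a b]
  have hN : IsMatchingOf ((insert c S).erase b) ((insert s(a, c) M).erase s(a, b)) := by
    rw [hSet, hMat]
    exact swap_matching ⟨hnd, hsub, huniq⟩ c hba hc
  have hNcost : matchingCost ((insert s(a, c) M).erase s(a, b))
      = matchingCost M - dist b a + dist c a := by
    rw [hMat]; exact swap_cost c hba hcaM
  refine ⟨hN, ?_⟩
  intro M' hM'
  -- c belongs to the new vertex set
  have hcS' : c ∈ (insert c S).erase b :=
    Finset.mem_erase.2 ⟨Ne.symm hbnc, Finset.mem_insert_self _ _⟩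
  obtain ⟨e, ⟨heM', hce⟩, _⟩ := hM'.2.2 c hcS'
  set x := Sym2.Mem.other hce with hxdef
  have hex : s(c, x) = e := Sym2.other_spec hce
  have hcx : c ≠ x := by
    have := hM'.1 e heM'
    rw [← hex] at this
    simpa [Sym2.isDiag_iff_proj_eq] using this
  have hxS' : x ∈ (insert c S).erase b := hM'.2.1 e heM' x (by rw [← hex]; simp)
  have hxS : x ∈ S := by
    rcases Finset.mem_insert.1 (Finset.mem_of_mem_erase hxS') with h | h
    · exact absurd h.symm hcx
    · exact h
  have hxb : x ≠ b := (Finset.mem_erase.1 hxS').1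
  have hcxM' : s(c, x) ∈ M' := hex ▸ heM'
  have hbS' : b ∉ (insert c S).erase b := fun h => (Finset.mem_erase.1 h).1 rfl
  have hbxM' : s(b, x) ∉ M' := fun h => hbS' (hM'.2.1 _ h b (by simp))
  -- the swapped-back matching of S
  have hM'' : IsMatchingOf (insert b (((insert c S).erase b).erase c))
      (insert s(b, x) (M'.erase s(c, x))) := swap_matching hM' b hcxM' hbS'
  have hSet2 : insert b (((insert c S).erase b).erase c) = S := by
    rw [hSet, Finset.erase_insert (by simp [hc]), Finset.insert_erase hbS]
  rw [hSet2] at hM''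
  have hle := hmax _ hM''
  have hcost2 : matchingCost (insert s(b, x) (M'.erase s(c, x)))
      = matchingCost M' - dist c x + dist b x := swap_cost b hcxM' hbxM'
  rw [hcost2] at hle
  have htri : dist c x ≤ dist c b + dist b x := dist_triangle c b x
  have hcb : dist c b = dist c a - dist b a := by
    rw [dist_comm c b, dist_comm c a, dist_comm b a]; linarith
  rw [hNcost]
  linarith
end

section
/- Let a₁, …, a_n be points in ℝ^d (n ≥ 1) and let λ₁, …, λ_n > 0 be positive reals with ∑_{i=1}^n λ_i a_i = 0. Then the graph G on vertex set {1, …, n} in which distinct i and j are adjacent if and only if ⟨a_i, a_j⟩ ≤ 0 is connected. -/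
open scoped RealInnerProductSpace

/-- If `a₁, …, a_n` are points in `ℝ^d` and `λ₁, …, λ_n > 0` satisfy `∑ λ_i a_i = 0`,
then the graph on `{1, …, n}` in which distinct `i` and `j` are adjacent iff
`⟨a_i, a_j⟩ ≤ 0` is connected. -/
theorem connected_of_pos_comb_zero {d n : ℕ} (hn : 1 ≤ n)
    (a : Fin n → EuclideanSpace ℝ (Fin d)) (lam : Fin n → ℝ)
    (hlam : ∀ i, 0 < lam i) (hsum : ∑ i, lam i • a i = 0) :
    (SimpleGraph.fromRel fun i j => ⟪a i, a j⟫ ≤ 0).Connected := by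
  classical
  set G := SimpleGraph.fromRel fun i j => ⟪a i, a j⟫ ≤ 0 with hG
  have hne : Nonempty (Fin n) := ⟨⟨0, hn⟩⟩
  refine ⟨fun v w => ?_⟩
  by_contra hvw
  set S : Finset (Fin n) := Finset.univ.filter (fun x => G.Reachable v x) with hS
  have hvS : v ∈ S := by simp [hS]
  have hwS : w ∈ Sᶜ := by simp [hS]; exact hvw
  have key : ∀ i ∈ S, ∀ j ∈ Sᶜ, 0 < ⟪a i, a j⟫ := by
    intro i hi j hj
    by_contra h
    push_neg at h
    have hjS : ¬ G.Reachable v j := by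
      simpa [hS] using hj
    have hij : i ≠ j := by
      rintro rfl
      exact hjS (by simpa [hS] using hi)
    have hadj : G.Adj i j := by
      rw [hG, SimpleGraph.fromRel_adj]
      exact ⟨hij, Or.inl h⟩
    have hri : G.Reachable v i := by simpa [hS] using hi
    exact hjS (hri.trans hadj.reachable)
  set u := ∑ i ∈ S, lam i • a i with hu
  have hsplit : u + ∑ j ∈ Sᶜ, lam j • a j = 0 := by
    rw [hu, Finset.sum_add_sum_compl]
    exact hsum
  have hneg : ∑ j ∈ Sᶜ, lam j • a j = -u := by
    linear_combination (norm := module) hsplit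
  have hpos : 0 < ⟪u, ∑ j ∈ Sᶜ, lam j • a j⟫ := by
    rw [hu, sum_inner]
    refine Finset.sum_pos (fun i hi => ?_) ⟨v, hvS⟩
    rw [inner_sum]
    refine Finset.sum_pos (fun j hj => ?_) ⟨w, hwS⟩
    rw [real_inner_smul_left, real_inner_smul_right]
    exact mul_pos (hlam i) (mul_pos (hlam j) (key i hi j hj))
  rw [hneg, inner_neg_right] at hpos
  have := real_inner_self_nonneg (x := u)
  linarith
end

section
/- Let X be a nonempty finite set of points in ℝ^d, let c be the center of the smallest-radius closed ball containing X (the unique global minimum point of the function H(x) = max_{a ∈ X} ‖x − a‖), and let r = H(c). Then c ∈ conv{a ∈ X : ‖a − c‖ = r}, i.e., the center of the smallest enclosing ball lies in the convex hull of the points of X at maximum distance from it. -/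
/-!
If `c` were not in the convex hull `K` of the farthest points, a hyperplane would separate `c`
from `K`. Moving `c` slightly along the normal `v` of that hyperplane, towards `K`, strictly
decreases the distance to every farthest point `a` (the derivative of `‖c - a + t • v‖²` at
`t = 0` is `2 ⟪v, c - a⟫ < 0`), while the other points stay at distance less than the radius for
small moves. The new center then has a smaller enclosing radius, contradicting minimality.
-/

open Filter Topology RealInnerProductSpace

variable {E : Type*} [NormedAddCommGroup E] [InnerProductSpace ℝ E]

theorem exists_inner_lt_of_notMem_of_isClosed_of_convex [CompleteSpace E] {K : Set E}
    (hconv : Convex ℝ K) (hclosed : IsClosed K) {x : E} (hx : x ∉ K) :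
    ∃ v : E, ∀ y ∈ K, ⟪v, x⟫ < ⟪v, y⟫ := by
  obtain ⟨f, u, hfx, hfK⟩ := geometric_hahn_banach_point_closed hconv hclosed hx
  refine ⟨(InnerProductSpace.toDual ℝ E).symm f, fun y hy => ?_⟩
  simpa only [InnerProductSpace.toDual_symm_apply] using hfx.trans (hfK y hy)

theorem eventually_norm_add_smul_lt_norm {w v : E} (h : ⟪v, w⟫ < 0) :
    ∀ᶠ t : ℝ in 𝓝[>] 0, ‖w + t • v‖ < ‖w‖ := by
  have hslope : ∀ᶠ t : ℝ in 𝓝 0, 2 * ⟪v, w⟫ + t * ‖v‖ ^ 2 < 0 := by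
    have : Tendsto (fun t : ℝ => 2 * ⟪v, w⟫ + t * ‖v‖ ^ 2) (𝓝 0) (𝓝 (2 * ⟪v, w⟫)) :=
      (by fun_prop : Continuous fun t : ℝ => 2 * ⟪v, w⟫ + t * ‖v‖ ^ 2).tendsto' 0 _ (by simp)
    exact this.eventually_lt_const (by linarith)
  filter_upwards [nhdsWithin_le_nhds hslope, self_mem_nhdsWithin] with t ht (htpos : 0 < t)
  have hsq : ‖w + t • v‖ ^ 2 = ‖w‖ ^ 2 + t * (2 * ⟪v, w⟫ + t * ‖v‖ ^ 2) := by
    rw [norm_add_sq_real, real_inner_smul_right, real_inner_comm w, norm_smul, Real.norm_eq_abs,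
      abs_of_pos htpos]
    ring
  have : ‖w + t • v‖ ^ 2 < ‖w‖ ^ 2 := by nlinarith
  exact (pow_lt_pow_iff_left₀ (norm_nonneg _) (norm_nonneg _) two_ne_zero).mp this

theorem exists_sup'_norm_sub_lt_of_inner_neg {X : Finset E} (hX : X.Nonempty) {c v : E}
    (hv : ∀ a ∈ X, ‖c - a‖ = X.sup' hX (fun b => ‖c - b‖) → ⟪v, c - a⟫ < 0) :
    ∃ x : E, X.sup' hX (fun a => ‖x - a‖) < X.sup' hX (fun a => ‖c - a‖) := by
  set r := X.sup' hX (fun a => ‖c - a‖)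
  have hmove : ∀ a ∈ X, ∀ᶠ t : ℝ in 𝓝[>] 0, ‖c + t • v - a‖ < r := by
    intro a ha
    simp only [add_sub_right_comm c]
    obtain hfar | hnear : ‖c - a‖ = r ∨ ‖c - a‖ < r := (X.le_sup' (fun b => ‖c - b‖) ha).eq_or_lt
    · rw [← hfar]
      exact eventually_norm_add_smul_lt_norm (hv a ha hfar)
    · have : Tendsto (fun t : ℝ => ‖c - a + t • v‖) (𝓝 0) (𝓝 ‖c - a‖) :=
        (by fun_prop : Continuous fun t : ℝ => ‖c - a + t • v‖).tendsto' 0 _ (by simp)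
      exact nhdsWithin_le_nhds (this.eventually_lt_const hnear)
  obtain ⟨t, ht⟩ := ((eventually_all_finset X).mpr hmove).exists
  exact ⟨c + t • v, (Finset.sup'_lt_iff hX).mpr ht⟩

/-- The center `c` of the smallest enclosing ball of a nonempty finite set `X ⊂ ℝ^d`
(i.e. a global minimum point of `H(x) = max_{a ∈ X} ‖x − a‖`) lies in the convex hull of
the points of `X` at maximum distance `r = H(c)` from `c`. -/
theorem center_mem_convexHull_farthest {d : ℕ} (X : Finset (EuclideanSpace ℝ (Fin d)))
    (hX : X.Nonempty) (c : EuclideanSpace ℝ (Fin d))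
    (hc : ∀ x : EuclideanSpace ℝ (Fin d),
      X.sup' hX (fun a => ‖c - a‖) ≤ X.sup' hX (fun a => ‖x - a‖)) :
    c ∈ convexHull ℝ
      {a : EuclideanSpace ℝ (Fin d) | a ∈ X ∧ ‖a - c‖ = X.sup' hX fun b => ‖c - b‖} := by
  set F := {a : EuclideanSpace ℝ (Fin d) | a ∈ X ∧ ‖a - c‖ = X.sup' hX fun b => ‖c - b‖}
  by_contra hcF
  have hFfin : F.Finite := X.finite_toSet.subset fun a ha => ha.1
  obtain ⟨v, hv⟩ := exists_inner_lt_of_notMem_of_isClosed_of_convex (convex_convexHull ℝ F)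
    (hFfin.isClosed_convexHull (𝕜 := ℝ)) hcF
  obtain ⟨x, hx⟩ := exists_sup'_norm_sub_lt_of_inner_neg hX (v := v) fun a ha hfar => by
    have := hv a (subset_convexHull ℝ F ⟨ha, by rwa [norm_sub_rev]⟩)
    rw [inner_sub_right]
    linarith
  exact (hc x).not_gt hx
end

section
/- Let X be a nonempty finite set of pairs (c_i, ρ_i) with c_i ∈ ℝ^d and ρ_i ∈ ℝ, for i = 1, …, m, and define F : ℝ^d → ℝ by F(x) = max_{1 ≤ i ≤ m} (‖x − c_i‖ − ρ_i). Then F attains its global minimum, and the global minimum point is unique: there exists exactly one y ∈ ℝ^d with F(y) = inf_{x ∈ ℝ^d} F(x). -/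
/-!
`F` is continuous and grows like `‖x‖` at infinity, so it attains its minimum. For uniqueness,
strict convexity of the Euclidean norm gives `‖midpoint x y - c‖ < max ‖x - c‖ ‖y - c‖` whenever
`x ≠ y`; evaluating at an index active at the midpoint yields
`F (midpoint x y) < max (F x) (F y)`, which is impossible for two distinct minimizers.
-/

open Set Filter

theorem continuous_of_forall_isGreatest_range {ι X : Type*} [Finite ι] [TopologicalSpace X]
    {f : ι → X → ℝ} {F : X → ℝ} (hf : ∀ i, Continuous (f i))
    (hF : ∀ x, IsGreatest (range fun i => f i x) (F x)) : Continuous F := by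
  rcases isEmpty_or_nonempty X with _ | ⟨⟨x₀⟩⟩
  · exact continuous_of_discreteTopology
  obtain ⟨i₀, -⟩ := (hF x₀).1
  have : Nonempty ι := ⟨i₀⟩
  have : Fintype ι := Fintype.ofFinite ι
  have hF_eq : F = fun x => Finset.univ.sup' Finset.univ_nonempty fun i => f i x := by
    ext x
    rw [Finset.sup'_univ_eq_ciSup, ← (hF x).csSup_eq, iSup]
  rw [hF_eq]
  exact Continuous.finset_sup'_apply _ fun i _ => hf i

theorem norm_midpoint_sub_lt_max {E : Type*} [NormedAddCommGroup E] [NormedSpace ℝ E]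
    [StrictConvexSpace ℝ E] {x y : E} (c : E) (hxy : x ≠ y) :
    ‖midpoint ℝ x y - c‖ < max ‖x - c‖ ‖y - c‖ := by
  rw [← vsub_eq_sub, midpoint_vsub, invOf_eq_inv]
  exact norm_combo_lt_of_ne (le_max_left _ _) (le_max_right _ _) (sub_left_injective.ne hxy)
    (by norm_num) (by norm_num) (by norm_num)

section

variable {ι E : Type*} [NormedAddCommGroup E] {c : ι → E} {ρ : ι → ℝ} {F : E → ℝ}

theorem tendsto_cocompact_atTop_of_forall_isGreatest_range [ProperSpace E]
    (hF : ∀ x, IsGreatest (range fun i => ‖x - c i‖ - ρ i) (F x)) :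
    Tendsto F (cocompact E) atTop := by
  obtain ⟨i, -⟩ := (hF 0).1
  refine tendsto_atTop_mono (fun x => ?_)
    (tendsto_atTop_add_const_right _ (-(‖c i‖ + ρ i)) tendsto_norm_cocompact_atTop)
  calc ‖x‖ + -(‖c i‖ + ρ i) ≤ ‖x - c i‖ - ρ i := by linarith [norm_sub_norm_le x (c i)]
    _ ≤ F x := (hF x).2 ⟨i, rfl⟩

theorem exists_forall_le_of_forall_isGreatest_range [Finite ι] [ProperSpace E]
    (hF : ∀ x, IsGreatest (range fun i => ‖x - c i‖ - ρ i) (F x)) :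
    ∃ y, ∀ x, F y ≤ F x :=
  (continuous_of_forall_isGreatest_range (fun _ => (continuous_id.sub continuous_const).norm.sub
    continuous_const) hF).exists_forall_le (tendsto_cocompact_atTop_of_forall_isGreatest_range hF)

theorem apply_midpoint_lt_max_of_forall_isGreatest_range [NormedSpace ℝ E] [StrictConvexSpace ℝ E]
    (hF : ∀ x, IsGreatest (range fun i => ‖x - c i‖ - ρ i) (F x)) {x y : E} (hxy : x ≠ y) :
    F (midpoint ℝ x y) < max (F x) (F y) := by
  obtain ⟨i, hi⟩ := (hF (midpoint ℝ x y)).1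
  rw [← hi]
  calc ‖midpoint ℝ x y - c i‖ - ρ i < max ‖x - c i‖ ‖y - c i‖ - ρ i :=
        sub_lt_sub_right (norm_midpoint_sub_lt_max (c i) hxy) _
    _ = max (‖x - c i‖ - ρ i) (‖y - c i‖ - ρ i) := max_sub_sub_right _ _ _ |>.symm
    _ ≤ max (F x) (F y) := max_le_max ((hF x).2 ⟨i, rfl⟩) ((hF y).2 ⟨i, rfl⟩)

end

theorem exists_unique_min_of_max_dist_sub_general {d m : ℕ}
    (c : Fin m → EuclideanSpace ℝ (Fin d)) (rho : Fin m → ℝ)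
    (F : EuclideanSpace ℝ (Fin d) → ℝ)
    (hF : ∀ x, IsGreatest (Set.range fun i => ‖x - c i‖ - rho i) (F x)) :
    ∃! y : EuclideanSpace ℝ (Fin d), ∀ x, F y ≤ F x := by
  obtain ⟨y, hy⟩ := exists_forall_le_of_forall_isGreatest_range hF
  refine ⟨y, hy, fun z hz => by_contra fun hzy => ?_⟩
  have hmid := apply_midpoint_lt_max_of_forall_isGreatest_range hF hzy
  exact (hy (midpoint ℝ z y)).not_gt (hmid.trans_le (max_le (hz y) le_rfl))

/-- For centers `c₁, …, c_m ∈ ℝ^d` and reals `ρ₁, …, ρ_m` (`m ≥ 1`), the function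
`F(x) = max_i (‖x − c_i‖ − ρ_i)` attains its global minimum at a unique point. -/
theorem exists_unique_min_of_max_dist_sub {d m : ℕ} (hm : 1 ≤ m)
    (c : Fin m → EuclideanSpace ℝ (Fin d)) (rho : Fin m → ℝ)
    (F : EuclideanSpace ℝ (Fin d) → ℝ)
    (hF : ∀ x, IsGreatest (Set.range fun i => ‖x - c i‖ - rho i) (F x)) :
    ∃! y : EuclideanSpace ℝ (Fin d), ∀ x, F y ≤ F x :=
  exists_unique_min_of_max_dist_sub_general c rho F hF
end

section
/- Let a, b ∈ ℝ² be distinct points and let ℓ be a line in ℝ² such that a and b lie in the same closed half-plane bounded by ℓ. Let a′ and b′ be the orthogonal projections of a and b onto ℓ, and set r_a = ‖a − a′‖ and r_b = ‖b − b′‖. Suppose r_a + r_b = ‖a − b‖, so the closed discs B_a of radius r_a centered at a and B_b of radius r_b centered at b touch externally at the unique point u = (r_b · a + r_a · b)/(r_a + r_b). Then the midpoint m of the segment a′b′ satisfies ⟨m − u, b − a⟩ = 0; that is, m lies on the line through u perpendicular to the segment ab (the common internal tangent line of B_a and B_b passes through the midpoint of a′b′). -/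
open scoped RealInnerProductSpace

/-!
The common internal tangent of two externally tangent circles is their radical axis
`{x : ‖x - a‖² - r_a² = ‖x - b‖² - r_b²}`: expanding the squares shows it is a line
perpendicular to `ab`, and the contact point `u` has power `0` for both circles.
By Pythagoras, the power of a point `x` of `ℓ` with respect to the circle about `a` is
`‖x - a'‖²`, since `a - a'` is normal to `ℓ`; the midpoint of `a'b'` is equidistant from
`a'` and `b'`, so it has equal powers and lies on the radical axis.
-/

section

variable {E : Type*} [NormedAddCommGroup E] [InnerProductSpace ℝ E]

theorem inner_sub_sub_eq_zero_of_norm_sq_sub_norm_sq_eq {x y a b : E}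
    (h : ‖x - a‖ ^ 2 - ‖x - b‖ ^ 2 = ‖y - a‖ ^ 2 - ‖y - b‖ ^ 2) : ⟪x - y, b - a⟫ = 0 := by
  simp only [norm_sub_sq_real, inner_sub_left, inner_sub_right] at h ⊢
  linarith

/-- The orthogonal projection of `a` onto `{x | ⟪x - t, n⟫ = 0}`; for `n = 0` the division
is junk and it is `a` itself. -/
noncomputable def projHyperplane (t n a : E) : E := a - (⟪a - t, n⟫ / ‖n‖ ^ 2) • n

theorem inner_projHyperplane_sub (t n a : E) : ⟪projHyperplane t n a - t, n⟫ = 0 := by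
  rcases eq_or_ne n 0 with rfl | hn
  · exact inner_zero_right _
  have hn2 : ‖n‖ ^ 2 ≠ 0 := by positivity
  rw [projHyperplane, sub_right_comm, inner_sub_left, real_inner_smul_left,
    real_inner_self_eq_norm_sq, div_mul_cancel₀ _ hn2, sub_self]

theorem norm_sub_sq_eq_norm_sub_projHyperplane_sq_add {t n x : E} (hx : ⟪x - t, n⟫ = 0) (a : E) :
    ‖x - a‖ ^ 2 = ‖x - projHyperplane t n a‖ ^ 2 + ‖a - projHyperplane t n a‖ ^ 2 := by
  have hxn : ⟪x - projHyperplane t n a, n⟫ = 0 := by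
    rw [← sub_sub_sub_cancel_right x _ t, inner_sub_left, hx, inner_projHyperplane_sub, sub_zero]
  have hperp : ⟪x - projHyperplane t n a, a - projHyperplane t n a⟫ = 0 := by
    rw [projHyperplane, sub_sub_cancel, real_inner_smul_right, ← projHyperplane, hxn, mul_zero]
  rw [sq, sq, sq, ← norm_sub_sq_eq_norm_sq_add_norm_sq_real hperp, sub_sub_sub_cancel_right]

theorem inner_midpoint_sub_eq_zero {t n p q : E} (hp : ⟪p - t, n⟫ = 0) (hq : ⟪q - t, n⟫ = 0) :
    ⟪midpoint ℝ p q - t, n⟫ = 0 := by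
  rw [midpoint_eq_smul_add, invOf_eq_inv,
    show (2⁻¹ : ℝ) • (p + q) - t = (2⁻¹ : ℝ) • ((p - t) + (q - t)) by module,
    real_inner_smul_left, inner_add_left, hp, hq, add_zero, mul_zero]

noncomputable def contactPoint (a b : E) (ra rb : ℝ) : E := (ra + rb)⁻¹ • (rb • a + ra • b)

theorem norm_contactPoint_sub_left {a b : E} (hab : a ≠ b) {ra rb : ℝ} (hra : 0 ≤ ra)
    (hrb : 0 ≤ rb) (htouch : ra + rb = ‖a - b‖) : ‖contactPoint a b ra rb - a‖ = ra := by
  have hd : ra + rb ≠ 0 := by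
    rw [htouch]
    exact norm_ne_zero_iff.mpr (sub_ne_zero.mpr hab)
  have hu : contactPoint a b ra rb = AffineMap.lineMap a b (ra / (ra + rb)) := by
    rw [contactPoint, AffineMap.lineMap_apply_module]
    match_scalars <;> field_simp; ring
  rw [hu, ← dist_eq_norm, dist_lineMap_left, dist_eq_norm, ← htouch, Real.norm_eq_abs,
    abs_of_nonneg (by positivity), div_mul_cancel₀ _ hd]

theorem norm_contactPoint_sub_right {a b : E} (hab : a ≠ b) {ra rb : ℝ} (hra : 0 ≤ ra)
    (hrb : 0 ≤ rb) (htouch : ra + rb = ‖a - b‖) : ‖contactPoint a b ra rb - b‖ = rb := by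
  rw [contactPoint, add_comm ra, add_comm (rb • a)]
  exact norm_contactPoint_sub_left hab.symm hrb hra (by rw [add_comm, htouch, norm_sub_rev])

end

theorem internal_tangent_through_midpoint_of_projections_general
    (a b t n : EuclideanSpace ℝ (Fin 2)) (hab : a ≠ b)
    (a' b' : EuclideanSpace ℝ (Fin 2))
    (ha' : a' = a - (⟪a - t, n⟫ / ‖n‖ ^ 2) • n)
    (hb' : b' = b - (⟪b - t, n⟫ / ‖n‖ ^ 2) • n)
    (ra rb : ℝ) (hra : ra = ‖a - a'‖) (hrb : rb = ‖b - b'‖)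
    (htouch : ra + rb = ‖a - b‖)
    (u : EuclideanSpace ℝ (Fin 2)) (hu : u = ((ra + rb)⁻¹ • (rb • a + ra • b))) :
    ⟪midpoint ℝ a' b' - u, b - a⟫ = 0 := by
  change a' = projHyperplane t n a at ha'
  change b' = projHyperplane t n b at hb'
  change u = contactPoint a b ra rb at hu
  have hra0 : 0 ≤ ra := hra ▸ norm_nonneg _
  have hrb0 : 0 ≤ rb := hrb ▸ norm_nonneg _
  have hua : ‖u - a‖ = ra := hu ▸ norm_contactPoint_sub_left hab hra0 hrb0 htouch
  have hub : ‖u - b‖ = rb := hu ▸ norm_contactPoint_sub_right hab hra0 hrb0 htouch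
  subst ha' hb' hra hrb
  set p := projHyperplane t n a
  set q := projHyperplane t n b
  have hm : ⟪midpoint ℝ p q - t, n⟫ = 0 :=
    inner_midpoint_sub_eq_zero (inner_projHyperplane_sub t n a) (inner_projHyperplane_sub t n b)
  have hmid : ‖midpoint ℝ p q - p‖ = ‖midpoint ℝ p q - q‖ := by
    simpa only [dist_eq_norm'] using dist_left_midpoint_eq_dist_right_midpoint (𝕜 := ℝ) p q
  apply inner_sub_sub_eq_zero_of_norm_sq_sub_norm_sq_eq
  rw [hua, hub, norm_sub_sq_eq_norm_sub_projHyperplane_sq_add hm a,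
    norm_sub_sq_eq_norm_sub_projHyperplane_sq_add hm b, hmid]
  ring

/-- Let `a ≠ b` be points of the plane lying in the same closed half-plane bounded by the
line `ℓ = {x : ⟨x − t, n⟩ = 0}` (with normal `n ≠ 0`), let `a'`, `b'` be their orthogonal
projections onto `ℓ` and `r_a = ‖a − a'‖`, `r_b = ‖b − b'‖`. If `r_a + r_b = ‖a − b‖`
(so the discs of radii `r_a`, `r_b` centered at `a`, `b` touch externally at
`u = (r_b a + r_a b)/(r_a + r_b)`), then the midpoint of `a'b'` lies on the line through
`u` perpendicular to `ab`: `⟨midpoint a' b' − u, b − a⟩ = 0`. -/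
theorem internal_tangent_through_midpoint_of_projections
    (a b t n : EuclideanSpace ℝ (Fin 2)) (hn : n ≠ 0) (hab : a ≠ b)
    (ha : 0 ≤ ⟪a - t, n⟫) (hb : 0 ≤ ⟪b - t, n⟫)
    (a' b' : EuclideanSpace ℝ (Fin 2))
    (ha' : a' = a - (⟪a - t, n⟫ / ‖n‖ ^ 2) • n)
    (hb' : b' = b - (⟪b - t, n⟫ / ‖n‖ ^ 2) • n)
    (ra rb : ℝ) (hra : ra = ‖a - a'‖) (hrb : rb = ‖b - b'‖)
    (htouch : ra + rb = ‖a - b‖)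
    (u : EuclideanSpace ℝ (Fin 2)) (hu : u = ((ra + rb)⁻¹ • (rb • a + ra • b))) :
    ⟪midpoint ℝ a' b' - u, b - a⟫ = 0 :=
  internal_tangent_through_midpoint_of_projections_general a b t n hab a' b' ha' hb' ra rb hra hrb
    htouch u hu
end
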